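/- Suppose 0 < α < ᾱ, and let ψ₁ < ψ₂ in (-π_p/2, 0) be the two roots of α + ((n-1)√(-k)/(p-1))·cos_p^{(p-1)}(ψ)·sin_p(ψ) = 0. Then the solution φ of φ' = α + ((n-1)√(-k)/(p-1))·cos_p^{(p-1)}(φ)·sin_p(φ) with φ(0) = -π_p/2 is bounded above by ψ₂ - ε for suitable ε > 0, converges to ψ₁ as t → ∞, and never reaches π_p/2. -/

import Mathlib

/-!
On `[-π_p/2, 0]` put `v = -sin_p ψ ∈ [0, 1]`. Since `cos_p = (1 - |sin_p|^p)^{1/p}` there,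
the right-hand side of the equation becomes `F ψ = α - c·m(v)`, where `c = (n-1)√(-k)/(p-1)`
and `m(v) = v(1 - v^p)^{(p-1)/p}` increases on `[0, p^{-1/p}]` and decreases on
`[p^{-1/p}, 1]`. As `sin_p` is increasing, the two roots `ψ₁ < ψ₂` correspond to the two
solutions of `c·m(v) = α`, so `F > 0` on `[-π_p/2, ψ₁)` and `F < 0` on `(ψ₁, ψ₂)`.
Consequently the solution starting at `-π_p/2` can neither go below `-π_p/2` nor rise above
`ψ₁`; on `[-π_p/2, L]` with `L < ψ₁` the speed is bounded below, so it passes every such `L`,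
and therefore tends to `ψ₁`.
-/

open Real Set Filter MeasureTheory Topology

/-- `spow x (p - 1)` is the paper's signed power `x^{(p-1)} = |x|^{p-2} x`. -/
noncomputable def spow (x q : ℝ) : ℝ := Real.sign x * |x| ^ q

noncomputable def pip (p : ℝ) : ℝ := ∫ s in (-1:ℝ)..1, (1 - |s| ^ p) ^ (-1/p)

/-- The paper's `sin_p, cos_p`: on `[-π_p/2, π_p/2]`, `sin_p` inverts
`x ↦ ∫₀ˣ (1 - |s|^p)^{-1/p} ds`; it is extended by reflection and `2π_p`-periodicity, and
`cos_p = sin_p'`. -/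
def IsPTrig (p : ℝ) (sinp cosp : ℝ → ℝ) : Prop :=
  (∀ t ∈ Set.Icc (-(pip p)/2) (pip p/2),
      t = ∫ s in (0:ℝ)..(sinp t), (1 - |s| ^ p) ^ (-1/p)) ∧
  (∀ t ∈ Set.Icc (pip p/2) (3 * pip p/2), sinp t = sinp (pip p - t)) ∧
  (∀ t, sinp (t + 2 * pip p) = sinp t) ∧
  (∀ t, HasDerivAt sinp (cosp t) t)

lemma intervalIntegrable_abs_rpow {r : ℝ} (hr : -1 < r) (a b : ℝ) :
    IntervalIntegrable (fun x : ℝ => |x| ^ r) volume a b := by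
  have hloc : LocallyIntegrable (fun x : ℝ => |x| ^ r) :=
    locallyIntegrable_of_norm_le_rpow (μ := volume) (C := 1) (α := -r) (by simp)
      (by simp; linarith)
      (ae_of_all _ fun x => by simp [abs_of_nonneg (rpow_nonneg (abs_nonneg x) r)])
      (continuous_abs.measurable.pow_const r).aestronglyMeasurable
  exact (hloc.integrableOn_isCompact isCompact_uIcc).intervalIntegrable

lemma abs_one_sub_le_abs_one_sub_rpow {x p : ℝ} (hx : 0 ≤ x) (hp : 1 ≤ p) :
    |1 - x| ≤ |1 - x ^ p| := by
  rcases le_total x 1 with h | h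
  · have := rpow_le_self_of_le_one hx h hp
    have : x ^ p ≤ 1 := rpow_le_one hx h (by linarith)
    rw [abs_of_nonneg (by linarith), abs_of_nonneg (by linarith)]; linarith
  · have := self_le_rpow_of_one_le h hp
    rw [abs_of_nonpos (by linarith), abs_of_nonpos (by linarith)]; linarith

lemma HasDerivAt.eq_neg_of_eqOn_const_sub {f f' : ℝ → ℝ} {a b c x : ℝ} (hab : a < b)
    (hf : ∀ t, HasDerivAt f (f' t) t) (hsymm : EqOn f (fun t => f (c - t)) (Icc a b))
    (hx : x ∈ Icc a b) : f' x = -f' (c - x) := by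
  have hrefl : HasDerivAt (fun t => f (c - t)) (-f' (c - x)) x :=
    (hf (c - x)).comp_const_sub c x
  exact (uniqueDiffOn_Icc hab x hx).eq_deriv _ (hf x).hasDerivWithinAt
    (hrefl.hasDerivWithinAt.congr hsymm (hsymm hx))

lemma HasDerivAt.periodic {f f' : ℝ → ℝ} {T : ℝ} (hf : ∀ t, HasDerivAt f (f' t) t)
    (hper : Function.Periodic f T) : Function.Periodic f' T := fun t => by
  have hshift : HasDerivAt (fun u => f (u + T)) (f' (t + T)) t :=
    (hf (t + T)).comp_add_const t T
  rw [show (fun u => f (u + T)) = f from funext hper] at hshift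
  exact hshift.unique (hf t)

section Unimodal

variable {α β : Type*} [LinearOrder α] [LinearOrder β] {f : α → β} {a b c x y z : α}

lemma mem_Icc_of_strictMonoOn_of_strictAntiOn (hmono : StrictMonoOn f (Icc a c))
    (hanti : StrictAntiOn f (Icc c b)) (hx : x ∈ Icc a b) (hy : y ∈ Icc a b) (hxy : x < y)
    (heq : f x = f y) : c ∈ Icc x y := by
  constructor
  · by_contra! hcx
    exact (hanti ⟨hcx.le, hx.2⟩ ⟨hcx.le.trans hxy.le, hy.2⟩ hxy).ne heq.symm
  · by_contra! hyc
    exact (hmono ⟨hx.1, hxy.le.trans hyc.le⟩ ⟨hy.1, hyc.le⟩ hxy).ne heq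

lemma lt_apply_of_mem_Ioo_of_strictMonoOn_of_strictAntiOn (hmono : StrictMonoOn f (Icc a c))
    (hanti : StrictAntiOn f (Icc c b)) (hx : x ∈ Icc a b) (hy : y ∈ Icc a b) (hxy : x < y)
    (heq : f x = f y) (hz : z ∈ Ioo x y) : f y < f z := by
  obtain ⟨hxc, hcy⟩ := mem_Icc_of_strictMonoOn_of_strictAntiOn hmono hanti hx hy hxy heq
  rcases le_total z c with hzc | hcz
  · exact heq ▸ hmono ⟨hx.1, hxc⟩ ⟨hx.1.trans hz.1.le, hzc⟩ hz.1
  · exact hanti ⟨hcz, hz.2.le.trans hy.2⟩ ⟨hcy, hy.2⟩ hz.2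

lemma apply_lt_of_mem_Ioc_of_strictMonoOn_of_strictAntiOn (hmono : StrictMonoOn f (Icc a c))
    (hanti : StrictAntiOn f (Icc c b)) (hx : x ∈ Icc a b) (hy : y ∈ Icc a b) (hxy : x < y)
    (heq : f x = f y) (hz : z ∈ Ioc y b) : f z < f y := by
  have hcy := (mem_Icc_of_strictMonoOn_of_strictAntiOn hmono hanti hx hy hxy heq).2
  exact hanti ⟨hcy, hy.2⟩ ⟨hcy.trans hz.1.le, hz.2⟩ hz.1

end Unimodal

section Autonomous

variable {F φ : ℝ → ℝ} {l t₁ t₂ : ℝ}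

lemma le_of_hasDerivAt_of_pos (hφ : ∀ t, HasDerivAt φ (F (φ t)) t) (hF : 0 < F l)
    (ht : t₁ ≤ t₂) (h₁ : l ≤ φ t₁) : l ≤ φ t₂ :=
  image_le_of_deriv_right_lt_deriv_boundary' continuousOn_const
    (fun x _ => hasDerivWithinAt_const x _ l) h₁
    (fun t _ => (hφ t).continuousAt.continuousWithinAt) (fun t _ => (hφ t).hasDerivWithinAt)
    (fun _ _ ht => ht ▸ hF) ⟨ht, le_rfl⟩

lemma le_of_hasDerivAt_of_neg (hφ : ∀ t, HasDerivAt φ (F (φ t)) t) (hF : F l < 0)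
    (ht : t₁ ≤ t₂) (h₁ : φ t₁ ≤ l) : φ t₂ ≤ l :=
  image_le_of_deriv_right_lt_deriv_boundary' (fun t _ => (hφ t).continuousAt.continuousWithinAt)
    (fun t _ => (hφ t).hasDerivWithinAt) h₁ continuousOn_const
    (fun x _ => hasDerivWithinAt_const x _ l) (fun _ _ ht => ht ▸ hF) ⟨ht, le_rfl⟩

lemma le_of_hasDerivAt_of_neg_on_Ioo (hφ : ∀ t, HasDerivAt φ (F (φ t)) t) {u : ℝ}
    (hlu : l < u) (hF : ∀ x ∈ Ioo l u, F x < 0) (ht : t₁ ≤ t₂) (h₁ : φ t₁ ≤ l) :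
    φ t₂ ≤ l :=
  ge_of_tendsto (tendsto_id.mono_left nhdsWithin_le_nhds) <|
    Filter.eventually_of_mem (Ioo_mem_nhdsGT hlu) fun x hx =>
      le_of_hasDerivAt_of_neg hφ (hF x hx) ht (h₁.trans hx.1.le)

lemma exists_le_of_hasDerivAt_of_pos (hφ : ∀ t, HasDerivAt φ (F (φ t)) t) {a L : ℝ}
    (hF : ContinuousOn F (Icc a L)) (hpos : ∀ x ∈ Icc a L, 0 < F x)
    (hmem : ∀ t, 0 ≤ t → a ≤ φ t) : ∃ t, 0 ≤ t ∧ L ≤ φ t := by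
  -- otherwise `φ` stays in `[a, L]`, where `φ' ≥ min F > 0`, so `φ` grows at least linearly
  by_contra! hlt
  obtain ⟨x₀, hx₀, hmin⟩ := isCompact_Icc.exists_isMinOn
    (nonempty_Icc.2 ((hmem 0 le_rfl).trans (hlt 0 le_rfl).le)) hF
  have hδ := hpos x₀ hx₀
  have hgrowth : ∀ t, 0 ≤ t → F x₀ * (t - 0) ≤ φ t - φ 0 := fun t ht =>
    (convex_Ici 0).mul_sub_le_image_sub_of_le_deriv
      (fun s _ => (hφ s).continuousAt.continuousWithinAt)
      (fun s _ => (hφ s).differentiableAt.differentiableWithinAt)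
      (fun s hs => by
        rw [interior_Ici] at hs
        rw [(hφ s).deriv]
        exact hmin ⟨hmem s hs.le, (hlt s hs.le).le⟩)
      0 (mem_Ici.2 le_rfl) t ht ht
  have hT : 0 ≤ (L - a) / F x₀ := div_nonneg (by linarith [hx₀.1, hx₀.2]) hδ.le
  have := hgrowth _ hT
  rw [sub_zero, mul_div_cancel₀ _ hδ.ne'] at this
  linarith [hlt _ hT, hmem 0 le_rfl]

lemma tendsto_of_hasDerivAt_of_pos (hφ : ∀ t, HasDerivAt φ (F (φ t)) t) {a b : ℝ}
    (hF : ContinuousOn F (Ico a b)) (hpos : ∀ x ∈ Ico a b, 0 < F x)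
    (hmem : ∀ t, 0 ≤ t → φ t ∈ Icc a b) : Tendsto φ atTop (𝓝 b) := by
  refine tendsto_order.2 ⟨fun b' hb' => ?_,
    fun b' hb' => eventually_atTop.2 ⟨0, fun t ht => (hmem t ht).2.trans_lt hb'⟩⟩
  rcases lt_or_ge b' a with hb'a | hab'
  · exact eventually_atTop.2 ⟨0, fun t ht => hb'a.trans_le (hmem t ht).1⟩
  have hL : (b' + b) / 2 ∈ Ico a b := ⟨by linarith, by linarith⟩
  obtain ⟨T, hT, hLT⟩ :=
    exists_le_of_hasDerivAt_of_pos hφ (hF.mono (Icc_subset_Ico_right hL.2))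
      (fun x hx => hpos x ⟨hx.1, hx.2.trans_lt hL.2⟩) (fun t ht => (hmem t ht).1)
  exact eventually_atTop.2 ⟨T, fun t ht =>
    (by linarith : b' < (b' + b) / 2).trans_le (le_of_hasDerivAt_of_pos hφ (hpos _ hL) ht hLT)⟩

end Autonomous

noncomputable def pKernel (p s : ℝ) : ℝ := (1 - |s| ^ p) ^ (-1/p)

lemma measurable_pKernel (p : ℝ) : Measurable (pKernel p) :=
  (measurable_const.sub (measurable_id.abs.pow_const p)).pow_const _

lemma pKernel_neg (p s : ℝ) : pKernel p (-s) = pKernel p s := by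
  rw [pKernel, pKernel, abs_neg]

lemma one_sub_abs_rpow_pos {p s : ℝ} (hp : 0 < p) (hs : |s| < 1) : 0 < 1 - |s| ^ p :=
  sub_pos.2 (rpow_lt_one (abs_nonneg s) hs hp)

lemma pKernel_pos {p s : ℝ} (hp : 0 < p) (hs : |s| < 1) : 0 < pKernel p s :=
  rpow_pos_of_pos (one_sub_abs_rpow_pos hp hs) _

lemma continuousAt_pKernel {p s : ℝ} (hp : 0 < p) (hs : |s| ≠ 1) :
    ContinuousAt (pKernel p) s := by
  have hbase : 1 - |s| ^ p ≠ 0 := by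
    rw [sub_ne_zero, ne_comm, ← one_rpow p, Ne, rpow_left_inj (abs_nonneg s) zero_le_one hp.ne']
    exact hs
  exact ((continuous_const.sub (continuous_abs.rpow_const fun _ => Or.inr hp.le)).continuousAt
    ).rpow_const (Or.inl hbase)

lemma pKernel_eq_zero {p s : ℝ} (hp : 0 < p) (hs : |s| = 1) : pKernel p s = 0 := by
  rw [pKernel, hs, one_rpow, sub_self, zero_rpow (div_ne_zero (by norm_num) hp.ne')]

lemma norm_pKernel_le {p : ℝ} (hp : 1 ≤ p) (s : ℝ) :
    ‖pKernel p s‖ ≤ |s - 1| ^ (-1/p) + |s + 1| ^ (-1/p) := by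
  have hp0 : 0 < p := by linarith
  have hnonneg : ∀ y : ℝ, 0 ≤ |y| ^ (-1/p) := fun y => rpow_nonneg (abs_nonneg y) _
  by_cases hs : |s| = 1
  · rw [pKernel_eq_zero hp0 hs, norm_zero]; exact add_nonneg (hnonneg _) (hnonneg _)
  have hexp : -1/p ≤ 0 := div_nonpos_of_nonpos_of_nonneg (by norm_num) hp0.le
  have key : ‖pKernel p s‖ ≤ abs (1 - |s|) ^ (-1/p) :=
    (abs_rpow_le_abs_rpow _ _).trans
      (rpow_le_rpow_of_nonpos (abs_pos.2 (sub_ne_zero.2 (Ne.symm hs)))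
        (abs_one_sub_le_abs_one_sub_rpow (abs_nonneg s) hp) hexp)
  rcases le_total 0 s with h | h
  · rw [abs_of_nonneg h, abs_sub_comm] at key
    linarith [hnonneg (s + 1)]
  · rw [abs_of_nonpos h, sub_neg_eq_add, add_comm] at key
    linarith [hnonneg (s - 1)]

/-- Beyond `±1` the base is negative and `rpow` returns `|1 - |s|^p|^{-1/p} cos(π/p)`: still
dominated by the integrable singularities `|s ∓ 1|^{-1/p}`. -/
lemma intervalIntegrable_pKernel {p : ℝ} (hp : 1 < p) (a b : ℝ) :
    IntervalIntegrable (pKernel p) volume a b := by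
  have hr : -1 < -1/p := by rw [neg_div, neg_lt_neg_iff, div_lt_one (by linarith)]; exact hp
  have h₁ := (intervalIntegrable_abs_rpow hr (a - 1) (b - 1)).comp_sub_right 1
  have h₂ := (intervalIntegrable_abs_rpow hr (a + 1) (b + 1)).comp_sub_right (-1)
  simp only [sub_add_cancel, sub_neg_eq_add, add_neg_cancel_right] at h₁ h₂
  exact (h₁.add h₂).mono_fun' (measurable_pKernel p).aestronglyMeasurable
    (ae_of_all _ (norm_pKernel_le hp.le))

noncomputable def arcsinp (p x : ℝ) : ℝ := ∫ s in (0:ℝ)..x, pKernel p s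

lemma hasDerivAt_arcsinp {p x : ℝ} (hp : 1 < p) (hx : |x| ≠ 1) :
    HasDerivAt (arcsinp p) (pKernel p x) x :=
  intervalIntegral.integral_hasDerivAt_right (intervalIntegrable_pKernel hp 0 x)
    (measurable_pKernel p).stronglyMeasurable.stronglyMeasurableAtFilter
    (continuousAt_pKernel (by linarith) hx)

lemma arcsinp_neg (p x : ℝ) : arcsinp p (-x) = -arcsinp p x := by
  have h := intervalIntegral.integral_comp_neg (a := 0) (b := x) (pKernel p)
  simp only [pKernel_neg, neg_zero] at h
  rw [arcsinp, arcsinp, h, intervalIntegral.integral_symm]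

lemma arcsinp_one {p : ℝ} (hp : 1 < p) : arcsinp p 1 = pip p / 2 := by
  have h := intervalIntegral.integral_add_adjacent_intervals (intervalIntegrable_pKernel hp (-1) 0)
    (intervalIntegrable_pKernel hp 0 1)
  have hleft : ∫ s in (-1:ℝ)..0, pKernel p s = arcsinp p 1 := by
    rw [intervalIntegral.integral_symm]
    change -arcsinp p (-1) = _
    rw [arcsinp_neg, neg_neg]
  change arcsinp p 1 = (∫ s in (-1:ℝ)..1, pKernel p s) / 2
  rw [← h, hleft]
  change _ = (_ + arcsinp p 1) / 2
  ring

lemma arcsinp_neg_one {p : ℝ} (hp : 1 < p) : arcsinp p (-1) = -(pip p) / 2 := by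
  rw [arcsinp_neg, arcsinp_one hp, neg_div]

lemma arcsinp_zero (p : ℝ) : arcsinp p 0 = 0 := intervalIntegral.integral_same

lemma strictMonoOn_arcsinp {p : ℝ} (hp : 1 < p) : StrictMonoOn (arcsinp p) (Icc (-1) 1) := by
  intro x hx y hy hxy
  have hpos : 0 < ∫ s in x..y, pKernel p s :=
    intervalIntegral.intervalIntegral_pos_of_pos_on (intervalIntegrable_pKernel hp x y)
      (fun s hs => pKernel_pos (by linarith)
        (abs_lt.2 ⟨hx.1.trans_lt hs.1, hs.2.trans_le hy.2⟩)) hxy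
  rw [← intervalIntegral.integral_interval_sub_left (intervalIntegrable_pKernel hp 0 y)
    (intervalIntegrable_pKernel hp 0 x)] at hpos
  exact sub_pos.1 hpos

lemma pip_pos {p : ℝ} (hp : 1 < p) : 0 < pip p := by
  have := strictMonoOn_arcsinp hp (by norm_num : (0:ℝ) ∈ Icc (-1) 1) (by norm_num) one_pos
  rw [arcsinp_zero, arcsinp_one hp] at this
  linarith

noncomputable def pProfile (p v : ℝ) : ℝ := v * (1 - v ^ p) ^ ((p - 1) / p)

section pProfile

variable {p : ℝ}

lemma continuous_pProfile (hp : 1 < p) : Continuous (pProfile p) :=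
  continuous_id.mul ((continuous_const.sub (continuous_id.rpow_const fun _ => Or.inr (by linarith))
    ).rpow_const fun _ => Or.inr (div_nonneg (by linarith) (by linarith)))

lemma pProfile_one (hp : 1 < p) : pProfile p 1 = 0 := by
  rw [pProfile, one_rpow, sub_self, zero_rpow (div_pos (by linarith) (by linarith)).ne', mul_zero]

lemma hasDerivAt_pProfile (hp : 1 < p) {v : ℝ} (hv : v ∈ Ioo (0:ℝ) 1) :
    HasDerivAt (pProfile p) ((1 - v ^ p) ^ ((p - 1) / p - 1) * (1 - p * v ^ p)) v := by
  set q := (p - 1) / p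
  have hbase : 0 < 1 - v ^ p := sub_pos.2 (rpow_lt_one hv.1.le hv.2 (by linarith))
  have hinner : HasDerivAt (fun w : ℝ => 1 - w ^ p) (-(p * v ^ (p - 1))) v :=
    (hasDerivAt_rpow_const (Or.inl hv.1.ne')).const_sub 1
  have hprod : HasDerivAt (fun w => w * (1 - w ^ p) ^ q)
      (1 * (1 - v ^ p) ^ q + v * (-(p * v ^ (p - 1)) * q * (1 - v ^ p) ^ (q - 1))) v :=
    (hasDerivAt_id' v).mul (hinner.rpow_const (Or.inl hbase.ne'))
  show HasDerivAt (fun w => w * (1 - w ^ p) ^ q) _ v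
  convert hprod using 1
  have hpow : v * v ^ (p - 1) = v ^ p := by
    rw [mul_comm, ← rpow_add_one hv.1.ne', sub_add_cancel]
  have hq : q * p = p - 1 := div_mul_cancel₀ _ (by linarith)
  have hsplit : (1 - v ^ p) ^ q = (1 - v ^ p) ^ (q - 1) * (1 - v ^ p) := by
    rw [← rpow_add_one hbase.ne', sub_add_cancel]
  rw [hsplit]
  linear_combination (p - 1) * (1 - v ^ p) ^ (q - 1) * hpow
    + (1 - v ^ p) ^ (q - 1) * v * v ^ (p - 1) * hq

lemma strictMonoOn_pProfile (hp : 1 < p) : StrictMonoOn (pProfile p) (Icc 0 (p⁻¹ ^ p⁻¹)) := by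
  have hpeak : p⁻¹ ^ p⁻¹ < 1 :=
    rpow_lt_one (by positivity) (inv_lt_one_of_one_lt₀ hp) (by positivity)
  refine strictMonoOn_of_deriv_pos (convex_Icc _ _) (continuous_pProfile hp).continuousOn
    fun v hv => ?_
  rw [interior_Icc] at hv
  rw [(hasDerivAt_pProfile hp ⟨hv.1, hv.2.trans hpeak⟩).deriv]
  have hvp : v ^ p < p⁻¹ := by
    have := rpow_lt_rpow hv.1.le hv.2 (by linarith : (0:ℝ) < p)
    rwa [rpow_inv_rpow (by positivity) (by linarith)] at this
  have hbase : 0 < 1 - v ^ p := by linarith [inv_lt_one_of_one_lt₀ hp]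
  have : p * v ^ p < 1 := by
    have := mul_lt_mul_of_pos_left hvp (by linarith : (0:ℝ) < p)
    rwa [mul_inv_cancel₀ (by linarith)] at this
  exact mul_pos (rpow_pos_of_pos hbase _) (by linarith)

lemma strictAntiOn_pProfile (hp : 1 < p) : StrictAntiOn (pProfile p) (Icc (p⁻¹ ^ p⁻¹) 1) := by
  have hpeak : 0 < p⁻¹ ^ p⁻¹ := by positivity
  refine strictAntiOn_of_deriv_neg (convex_Icc _ _) (continuous_pProfile hp).continuousOn
    fun v hv => ?_
  rw [interior_Icc] at hv
  rw [(hasDerivAt_pProfile hp ⟨hpeak.trans hv.1, hv.2⟩).deriv]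
  have hvp : p⁻¹ < v ^ p := by
    have := rpow_lt_rpow hpeak.le hv.1 (by linarith : (0:ℝ) < p)
    rwa [rpow_inv_rpow (by positivity) (by linarith)] at this
  have hbase : 0 < 1 - v ^ p := sub_pos.2 (rpow_lt_one (hpeak.trans hv.1).le hv.2 (by linarith))
  have : 1 < p * v ^ p := by
    have := mul_lt_mul_of_pos_left hvp (by linarith : (0:ℝ) < p)
    rwa [mul_inv_cancel₀ (by linarith)] at this
  exact mul_neg_of_pos_of_neg (rpow_pos_of_pos hbase _) (by linarith)

end pProfile

noncomputable def pruferRhs (p α c : ℝ) (sinp cosp : ℝ → ℝ) (ψ : ℝ) : ℝ :=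
  α + c * spow (cosp ψ) (p - 1) * sinp ψ

namespace IsPTrig

variable {p : ℝ} {sinp cosp : ℝ → ℝ} (h : IsPTrig p sinp cosp)
include h

lemma arcsinp_sinp {t : ℝ} (ht : t ∈ Icc (-(pip p)/2) (pip p/2)) : arcsinp p (sinp t) = t :=
  (h.1 t ht).symm

lemma continuous : Continuous sinp :=
  continuous_iff_continuousAt.2 fun t => (h.2.2.2 t).continuousAt

variable (hp : 1 < p)
include hp

lemma cosp_half_pip : cosp (pip p / 2) = 0 := by
  have hP := pip_pos hp
  have := HasDerivAt.eq_neg_of_eqOn_const_sub (by linarith) h.2.2.2 h.2.1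
    (left_mem_Icc.2 (by linarith : pip p / 2 ≤ 3 * pip p / 2))
  rw [show pip p - pip p / 2 = pip p / 2 by ring] at this
  linarith

lemma cosp_neg_half_pip : cosp (-(pip p) / 2) = 0 := by
  have hP := pip_pos hp
  have := HasDerivAt.eq_neg_of_eqOn_const_sub (by linarith) h.2.2.2 h.2.1
    (right_mem_Icc.2 (by linarith : pip p / 2 ≤ 3 * pip p / 2))
  have hper := HasDerivAt.periodic h.2.2.2 h.2.2.1 (-(pip p) / 2)
  rw [show pip p - 3 * pip p / 2 = -(pip p) / 2 by ring] at this
  rw [show -(pip p) / 2 + 2 * pip p = 3 * pip p / 2 by ring] at hper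
  linarith

lemma pKernel_sinp_mul_cosp {t : ℝ} (ht : t ∈ Icc (-(pip p)/2) (pip p/2))
    (hs : |sinp t| ≠ 1) : pKernel p (sinp t) * cosp t = 1 := by
  have hcomp : HasDerivAt (fun u => arcsinp p (sinp u)) (pKernel p (sinp t) * cosp t) t :=
    (hasDerivAt_arcsinp hp hs).comp t (h.2.2.2 t)
  have hP := pip_pos hp
  exact (uniqueDiffOn_Icc (by linarith) t ht).eq_deriv _
    (hcomp.hasDerivWithinAt.congr (fun u hu => (h.arcsinp_sinp hu).symm) (h.arcsinp_sinp ht).symm)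
    (hasDerivWithinAt_id t _)

lemma abs_sinp_eq_one {t : ℝ} (ht : t ∈ Icc (-(pip p)/2) (pip p/2))
    (hc : cosp t = 0) : |sinp t| = 1 := by
  by_contra hs
  simpa [hc] using h.pKernel_sinp_mul_cosp hp ht hs

lemma sinp_half_pip : sinp (pip p / 2) = 1 := by
  have hP := pip_pos hp
  have ht : pip p / 2 ∈ Icc (-(pip p)/2) (pip p/2) := ⟨by linarith, le_rfl⟩
  rcases abs_eq zero_le_one |>.1 (h.abs_sinp_eq_one hp ht (h.cosp_half_pip hp)) with hs | hs
  · exact hs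
  · have := h.arcsinp_sinp ht
    rw [hs, arcsinp_neg_one hp] at this
    linarith

lemma sinp_neg_half_pip : sinp (-(pip p) / 2) = -1 := by
  have hP := pip_pos hp
  have ht : -(pip p) / 2 ∈ Icc (-(pip p)/2) (pip p/2) := ⟨le_rfl, by linarith⟩
  rcases abs_eq zero_le_one |>.1 (h.abs_sinp_eq_one hp ht (h.cosp_neg_half_pip hp)) with hs | hs
  · have := h.arcsinp_sinp ht
    rw [hs, arcsinp_one hp] at this
    linarith
  · exact hs

lemma strictMonoOn : StrictMonoOn sinp (Icc (-(pip p)/2) (pip p/2)) := by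
  have hP := pip_pos hp
  refine ContinuousOn.strictMonoOn_of_injOn_Icc (by linarith) ?_ h.continuous.continuousOn
    fun x hx y hy hxy => by rw [← h.arcsinp_sinp hx, ← h.arcsinp_sinp hy, hxy]
  rw [h.sinp_neg_half_pip hp, h.sinp_half_pip hp]; norm_num

lemma abs_sinp_lt_one {t : ℝ} (ht : t ∈ Ioo (-(pip p)/2) (pip p/2)) :
    |sinp t| < 1 := by
  have hmono := h.strictMonoOn hp
  have hP := pip_pos hp
  have h₁ := hmono ⟨le_rfl, by linarith⟩ (Ioo_subset_Icc_self ht) ht.1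
  have h₂ := hmono (Ioo_subset_Icc_self ht) ⟨by linarith, le_rfl⟩ ht.2
  rw [h.sinp_neg_half_pip hp] at h₁
  rw [h.sinp_half_pip hp] at h₂
  exact abs_lt.2 ⟨h₁, h₂⟩

lemma sinp_zero : sinp 0 = 0 := by
  have hP := pip_pos hp
  have h0 : (0:ℝ) ∈ Ioo (-(pip p)/2) (pip p/2) := ⟨by linarith, by linarith⟩
  have hs := abs_lt.1 (h.abs_sinp_lt_one hp h0)
  refine (strictMonoOn_arcsinp hp).injOn ⟨hs.1.le, hs.2.le⟩ ⟨by norm_num, by norm_num⟩ ?_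
  rw [h.arcsinp_sinp (Ioo_subset_Icc_self h0), arcsinp_zero]

lemma cosp_eq {t : ℝ} (ht : t ∈ Ioo (-(pip p)/2) (pip p/2)) :
    cosp t = (1 - |sinp t| ^ p) ^ (1/p) := by
  have hs := h.abs_sinp_lt_one hp ht
  rw [eq_inv_of_mul_eq_one_right (h.pKernel_sinp_mul_cosp hp (Ioo_subset_Icc_self ht) hs.ne),
    pKernel, neg_div, rpow_neg (one_sub_abs_rpow_pos (by linarith) hs).le, inv_inv]

lemma strictAntiOn_neg_sinp : StrictAntiOn (fun ψ => -sinp ψ) (Icc (-(pip p)/2) 0) := by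
  have hP := pip_pos hp
  exact fun x hx y hy hxy =>
    neg_lt_neg (h.strictMonoOn hp ⟨hx.1, by linarith [hx.2]⟩ ⟨hy.1, by linarith [hy.2]⟩ hxy)

lemma neg_sinp_mem_Icc {ψ : ℝ} (hψ : ψ ∈ Icc (-(pip p)/2) 0) : -sinp ψ ∈ Icc 0 1 := by
  have hP := pip_pos hp
  have hmono := (h.strictMonoOn hp).monotoneOn
  have h₁ := hmono ⟨le_rfl, by linarith⟩ ⟨hψ.1, by linarith [hψ.2]⟩ hψ.1
  have h₂ := hmono ⟨hψ.1, by linarith [hψ.2]⟩ ⟨by linarith, by linarith⟩ hψ.2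
  rw [h.sinp_neg_half_pip hp] at h₁
  rw [h.sinp_zero hp] at h₂
  exact ⟨by linarith, by linarith⟩

lemma spow_cosp_mul_sinp {ψ : ℝ} (hψ : ψ ∈ Icc (-(pip p)/2) 0) :
    spow (cosp ψ) (p - 1) * sinp ψ = -pProfile p (-sinp ψ) := by
  rcases hψ.1.eq_or_lt with hψ' | hψ'
  · rw [← hψ', h.cosp_neg_half_pip hp, h.sinp_neg_half_pip hp, neg_neg, pProfile_one hp]
    simp [spow]
  have hP := pip_pos hp
  have ht : ψ ∈ Ioo (-(pip p)/2) (pip p/2) := ⟨hψ', by linarith [hψ.2]⟩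
  have hbase := one_sub_abs_rpow_pos (by linarith : (0:ℝ) < p) (h.abs_sinp_lt_one hp ht)
  have hcos := h.cosp_eq hp ht
  have hcpos : 0 < cosp ψ := hcos ▸ rpow_pos_of_pos hbase _
  rw [spow, sign_of_pos hcpos, one_mul, abs_of_pos hcpos, hcos, ← rpow_mul hbase.le,
    one_div_mul_eq_div, abs_of_nonpos (neg_nonneg.1 (h.neg_sinp_mem_Icc hp hψ).1), pProfile]
  ring

lemma pruferRhs_eq {α c ψ : ℝ} (hψ : ψ ∈ Icc (-(pip p)/2) 0) :
    pruferRhs p α c sinp cosp ψ = α - c * pProfile p (-sinp ψ) := by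
  rw [pruferRhs, mul_assoc, h.spow_cosp_mul_sinp hp hψ]
  ring

lemma continuousOn_pruferRhs (α c : ℝ) :
    ContinuousOn (pruferRhs p α c sinp cosp) (Icc (-(pip p)/2) 0) :=
  (continuous_const.sub (continuous_const.mul ((continuous_pProfile hp).comp
    h.continuous.neg))).continuousOn.congr fun _ hψ => h.pruferRhs_eq hp hψ

section Roots

variable {α c ψ₁ ψ₂ : ℝ} (hc : 0 < c) (h1 : ψ₁ ∈ Icc (-(pip p)/2) 0)
  (h2 : ψ₂ ∈ Icc (-(pip p)/2) 0) (hr1 : pruferRhs p α c sinp cosp ψ₁ = 0)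
  (hr2 : pruferRhs p α c sinp cosp ψ₂ = 0)
include hc h1 h2 hr1 hr2

lemma pProfile_neg_sinp_roots_eq : pProfile p (-sinp ψ₂) = pProfile p (-sinp ψ₁) := by
  rw [h.pruferRhs_eq hp h1] at hr1
  rw [h.pruferRhs_eq hp h2] at hr2
  exact mul_left_cancel₀ hc.ne' (by linarith)

lemma pruferRhs_pos (h12 : ψ₁ < ψ₂) {ψ : ℝ} (hψ : ψ ∈ Ico (-(pip p)/2) ψ₁) :
    0 < pruferRhs p α c sinp cosp ψ := by
  have hψ' : ψ ∈ Icc (-(pip p)/2) 0 := ⟨hψ.1, hψ.2.le.trans h1.2⟩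
  have hlt := apply_lt_of_mem_Ioc_of_strictMonoOn_of_strictAntiOn (strictMonoOn_pProfile hp)
    (strictAntiOn_pProfile hp) (h.neg_sinp_mem_Icc hp h2) (h.neg_sinp_mem_Icc hp h1)
    (h.strictAntiOn_neg_sinp hp h1 h2 h12) (h.pProfile_neg_sinp_roots_eq hp hc h1 h2 hr1 hr2)
    ⟨h.strictAntiOn_neg_sinp hp hψ' h1 hψ.2, (h.neg_sinp_mem_Icc hp hψ').2⟩
  rw [h.pruferRhs_eq hp h1] at hr1
  rw [h.pruferRhs_eq hp hψ']
  nlinarith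

lemma pruferRhs_neg (h12 : ψ₁ < ψ₂) {ψ : ℝ} (hψ : ψ ∈ Ioo ψ₁ ψ₂) :
    pruferRhs p α c sinp cosp ψ < 0 := by
  have hψ' : ψ ∈ Icc (-(pip p)/2) 0 := ⟨h1.1.trans hψ.1.le, hψ.2.le.trans h2.2⟩
  have hlt := lt_apply_of_mem_Ioo_of_strictMonoOn_of_strictAntiOn (strictMonoOn_pProfile hp)
    (strictAntiOn_pProfile hp) (h.neg_sinp_mem_Icc hp h2) (h.neg_sinp_mem_Icc hp h1)
    (h.strictAntiOn_neg_sinp hp h1 h2 h12) (h.pProfile_neg_sinp_roots_eq hp hc h1 h2 hr1 hr2)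
    ⟨h.strictAntiOn_neg_sinp hp hψ' h2 hψ.2, h.strictAntiOn_neg_sinp hp h1 hψ' hψ.1⟩
  rw [h.pruferRhs_eq hp h1] at hr1
  rw [h.pruferRhs_eq hp hψ']
  nlinarith

end Roots

end IsPTrig

theorem stmt9_general (p n k α : ℝ) (hp : 1 < p) (hn : 2 ≤ n) (hk : k < 0)
    (sinp cosp : ℝ → ℝ) (htrig : IsPTrig p sinp cosp)
    (ψ₁ ψ₂ : ℝ) (h1 : ψ₁ ∈ Set.Ioo (-(pip p)/2) 0) (h2 : ψ₂ ∈ Set.Ioo (-(pip p)/2) 0)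
    (h12 : ψ₁ < ψ₂)
    (hr1 : α + (n-1) * Real.sqrt (-k) / (p-1) * spow (cosp ψ₁) (p-1) * sinp ψ₁ = 0)
    (hr2 : α + (n-1) * Real.sqrt (-k) / (p-1) * spow (cosp ψ₂) (p-1) * sinp ψ₂ = 0)
    (φ : ℝ → ℝ) (hφ0 : φ 0 = -(pip p)/2)
    (hφ : ∀ t, HasDerivAt φ
      (α + (n-1) * Real.sqrt (-k) / (p-1) * spow (cosp (φ t)) (p-1) * sinp (φ t)) t) :
    (∃ ε > 0, ∀ t : ℝ, 0 ≤ t → φ t ≤ ψ₂ - ε) ∧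
    Filter.Tendsto φ Filter.atTop (nhds ψ₁) ∧
    (∀ t : ℝ, 0 ≤ t → φ t < pip p / 2) := by
  set F := pruferRhs p α ((n - 1) * √(-k) / (p - 1)) sinp cosp
  have hc : 0 < (n - 1) * √(-k) / (p - 1) :=
    div_pos (mul_pos (by linarith) (sqrt_pos.2 (by linarith))) (by linarith)
  have hψ₁ := Ioo_subset_Icc_self h1
  have hψ₂ := Ioo_subset_Icc_self h2
  have hpos : ∀ ψ ∈ Ico (-(pip p)/2) ψ₁, 0 < F ψ :=
    fun _ => htrig.pruferRhs_pos hp hc hψ₁ hψ₂ hr1 hr2 h12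
  have hneg : ∀ ψ ∈ Ioo ψ₁ ψ₂, F ψ < 0 :=
    fun _ => htrig.pruferRhs_neg hp hc hψ₁ hψ₂ hr1 hr2 h12
  have hφ' : ∀ t, HasDerivAt φ (F (φ t)) t := hφ
  have hmem : ∀ t, 0 ≤ t → φ t ∈ Icc (-(pip p)/2) ψ₁ := fun t ht =>
    ⟨le_of_hasDerivAt_of_pos hφ' (hpos _ ⟨le_rfl, h1.1⟩) ht hφ0.ge,
      le_of_hasDerivAt_of_neg_on_Ioo hφ' h12 hneg ht (hφ0.trans_le h1.1.le)⟩
  have hcont : ContinuousOn F (Ico (-(pip p)/2) ψ₁) :=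
    (htrig.continuousOn_pruferRhs hp _ _).mono fun _ hψ => ⟨hψ.1, hψ.2.le.trans hψ₁.2⟩
  refine ⟨⟨ψ₂ - ψ₁, sub_pos.2 h12, fun t ht => by linarith [(hmem t ht).2]⟩,
    tendsto_of_hasDerivAt_of_pos hφ' hcont hpos hmem, fun t ht => ?_⟩
  linarith [(hmem t ht).2, h1.2, pip_pos hp]

/-- if `0 < α < ᾱ` and `ψ₁ < ψ₂` in `(-π_p/2,0)` are the two roots
of `α + ((n-1)√(-k)/(p-1))·cos_p^{(p-1)}(ψ)·sin_p(ψ) = 0`, then the solution of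
the corresponding Prüfer IVP with `φ(0) = -π_p/2` stays below `ψ₂ - ε` for some
`ε > 0`, converges to `ψ₁` at infinity, and never reaches `π_p/2`. -/
theorem stmt9 (p n k α : ℝ) (hp : 1 < p) (hn : 2 ≤ n) (hk : k < 0) (hα : 0 < α)
    (sinp cosp : ℝ → ℝ) (htrig : IsPTrig p sinp cosp)
    (l : ℝ)
    (hl : IsGreatest ((fun ψ => -(spow (cosp ψ) (p-1) * sinp ψ)) ''
            Set.Ioo (-(pip p)/2) 0) l)
    (hαsmall : α < (n-1) * l * Real.sqrt (-k) / (p-1))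
    (ψ₁ ψ₂ : ℝ) (h1 : ψ₁ ∈ Set.Ioo (-(pip p)/2) 0) (h2 : ψ₂ ∈ Set.Ioo (-(pip p)/2) 0)
    (h12 : ψ₁ < ψ₂)
    (hr1 : α + (n-1) * Real.sqrt (-k) / (p-1) * spow (cosp ψ₁) (p-1) * sinp ψ₁ = 0)
    (hr2 : α + (n-1) * Real.sqrt (-k) / (p-1) * spow (cosp ψ₂) (p-1) * sinp ψ₂ = 0)
    (φ : ℝ → ℝ) (hφ0 : φ 0 = -(pip p)/2)
    (hφ : ∀ t, HasDerivAt φ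
      (α + (n-1) * Real.sqrt (-k) / (p-1) * spow (cosp (φ t)) (p-1) * sinp (φ t)) t) :
    (∃ ε > 0, ∀ t : ℝ, 0 ≤ t → φ t ≤ ψ₂ - ε) ∧
    Filter.Tendsto φ Filter.atTop (nhds ψ₁) ∧
    (∀ t : ℝ, 0 ≤ t → φ t < pip p / 2) :=
  stmt9_general p n k α hp hn hk sinp cosp htrig ψ₁ ψ₂ h1 h2 h12 hr1 hr2 φ hφ0 hφ
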